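/- Let S = {v₁, …, vₙ} ⊆ ℤ^g be a finite set and suppose v₁ ≠ v₂ are both ℤ^g-coloops of S. Let σ = { ∑ᵢ λᵢ vᵢvᵢᵀ : λᵢ ≥ 0 } be the cone of real symmetric matrices generated by the rank-one forms vᵢvᵢᵀ. Then there exists A ∈ GL_g(ℤ) such that the linear map X ↦ A X Aᵀ on symmetric matrices maps σ onto σ, and its restriction to the ℝ-linear span of σ has determinant −1 (i.e. σ has an orientation-reversing automorphism induced by an element of GL_g(ℤ)). -/

import Mathlib

open Matrix

/-- `v` is a `ℤ^g`-coloop of `S ⊆ ℤ^g`: there is a `ℤ`-basis of `ℤ^g` containing `v`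
such that every other element of `S` lies in the `ℤ`-span of the remaining basis
vectors. -/
def IsZColoop {g : ℕ} (S : Set (Fin g → ℤ)) (v : Fin g → ℤ) : Prop :=
  ∃ (b : Module.Basis (Fin g) ℤ (Fin g → ℤ)) (i₀ : Fin g), b i₀ = v ∧
    ∀ w ∈ S, w ≠ v → w ∈ Submodule.span ℤ (b '' {i | i ≠ i₀})

/-- The linear endomorphism `X ↦ B X Bᵀ` of the space of `g × g` real matrices. -/
def conjMap {g : ℕ} (B : Matrix (Fin g) (Fin g) ℝ) :
    Matrix (Fin g) (Fin g) ℝ →ₗ[ℝ] Matrix (Fin g) (Fin g) ℝ where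
  toFun X := B * X * Bᵀ
  map_add' X Y := by simp [Matrix.mul_add, Matrix.add_mul]
  map_smul' c X := by simp [Matrix.mul_smul, Matrix.smul_mul]

/-- The cone `σ = { ∑ᵢ λᵢ vᵢvᵢᵀ : λᵢ ≥ 0 }` of real symmetric matrices generated by the
rank-one forms `vᵢvᵢᵀ`. -/
def coneOf {g n : ℕ} (v : Fin n → Fin g → ℤ) : Set (Matrix (Fin g) (Fin g) ℝ) :=
  {Q | ∃ lam : Fin n → ℝ, (∀ i, 0 ≤ lam i) ∧
    Q = ∑ i, lam i • Matrix.vecMulVec (fun j => (v i j : ℝ)) (fun j => (v i j : ℝ))}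

/-!
If bases `b`, `c` of `ℤ^g` exhibit `v₁ = b i₀` and `v₂ = c j₀` as coloops, then
`x ↦ x + (b*_{i₀}(x) - c*_{j₀}(x)) (v₂ - v₁)` is an integral involution that swaps `v₁` and `v₂`
and fixes every other `vᵢ`, since all other `vᵢ` have vanishing `i₀`- and `j₀`-coordinates.
Its matrix `A` therefore permutes the generators `vᵢvᵢᵀ` of `σ`, so `X ↦ A X Aᵀ` preserves `σ`.
On the span of `σ` this map moves every generator only along `d = v₁v₁ᵀ - v₂v₂ᵀ`, and it sends
`d` to `-d` (`d ≠ 0` because `b*_{i₀}` separates `v₁` from `±v₂`), so it is a reflection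
`id + ℓ ⊗ d` with `ℓ d = -2`, of determinant `1 + ℓ d = -1`.
-/

open scoped NNReal

theorem LinearMap.det_id_add_smulRight {R M : Type*} [CommRing R] [AddCommGroup M] [Module R M]
    [Module.Free R M] [Module.Finite R M] (ℓ : M →ₗ[R] R) (d : M) :
    LinearMap.det (LinearMap.id + ℓ.smulRight d) = 1 + ℓ d := by
  let b := Module.Free.chooseBasis R M
  rw [← LinearMap.det_toMatrix b, map_add, LinearMap.toMatrix_id, LinearMap.toMatrix_smulRight,
    vecMulVec_eq Unit, det_one_add_replicateCol_mul_replicateRow]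
  congr 1
  conv_rhs => rw [← b.sum_repr d]
  simp only [map_sum, map_smul, dotProduct, Function.comp_apply, smul_eq_mul, mul_comm]

theorem LinearMap.det_eq_neg_one_of_sub_mem_span_singleton {K V : Type*} [Field K]
    [AddCommGroup V] [Module K V] [FiniteDimensional K V] (T : V →ₗ[K] V) {d : V} (hd : d ≠ 0)
    (hTd : T d = -d) (hT : ∀ x, T x - x ∈ K ∙ d) : LinearMap.det T = -1 := by
  let ℓ : V →ₗ[K] K :=
    (LinearEquiv.coord K V d hd).toLinearMap ∘ₗ (T - LinearMap.id).codRestrict (K ∙ d) hT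
  have hℓ : ∀ x, ℓ x • d = T x - x := fun x =>
    LinearEquiv.toSpanNonzeroSingleton_symm_apply_smul K V d hd _
  have hTℓ : T = LinearMap.id + ℓ.smulRight d := LinearMap.ext fun x => by simp [hℓ]
  have hℓd : ℓ d = -2 :=
    smul_left_injective K hd <| show ℓ d • d = (-2 : K) • d by rw [hℓ, hTd]; module
  rw [hTℓ, LinearMap.det_id_add_smulRight, hℓd]
  norm_num

theorem IsZColoop.exists_dual {g : ℕ} {S : Set (Fin g → ℤ)} {v : Fin g → ℤ}
    (h : IsZColoop S v) :
    ∃ φ : (Fin g → ℤ) →ₗ[ℤ] ℤ, φ v = 1 ∧ ∀ w ∈ S, w ≠ v → φ w = 0 := by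
  obtain ⟨b, i₀, rfl, hS⟩ := h
  refine ⟨b.coord i₀, by simp, fun w hw hne => ?_⟩
  have hsupp := b.mem_span_image.mp (hS w hw hne)
  exact Finsupp.notMem_support_iff.mp fun hi => hsupp hi rfl

section CoordSwap

variable {R M : Type*} [CommRing R] [AddCommGroup M] [Module R M]

def coordSwap (φ ψ : M →ₗ[R] R) (v w : M) : M →ₗ[R] M :=
  LinearMap.id + (φ - ψ).smulRight (w - v)

variable {φ ψ : M →ₗ[R] R} {v w : M}

@[simp]
theorem coordSwap_apply (x : M) : coordSwap φ ψ v w x = x + (φ x - ψ x) • (w - v) := rfl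

theorem coordSwap_apply_left (hφv : φ v = 1) (hψv : ψ v = 0) : coordSwap φ ψ v w v = w := by
  simp [hφv, hψv]

theorem coordSwap_apply_of_eq_zero {x : M} (hφx : φ x = 0) (hψx : ψ x = 0) :
    coordSwap φ ψ v w x = x := by
  simp [hφx, hψx]

theorem coordSwap_involutive (hφv : φ v = 1) (hφw : φ w = 0) (hψv : ψ v = 0) (hψw : ψ w = 1) :
    Function.Involutive (coordSwap φ ψ v w) := fun x => by
  simp only [coordSwap_apply, map_add, map_smul, map_sub, hφv, hφw, hψv, hψw]
  module

end CoordSwap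

theorem Function.Involutive.image_eq_self_of_swap {α : Type*} {f : α → α} (hf : f.Involutive)
    {S : Set α} {x y : α} (hx : x ∈ S) (hy : y ∈ S) (hfx : f x = y)
    (hfix : ∀ w ∈ S, w ≠ x → w ≠ y → f w = w) : f '' S = S := by
  have hmaps : Set.MapsTo f S S := fun w hw => by
    by_cases hwx : w = x
    · rwa [hwx, hfx]
    by_cases hwy : w = y
    · rwa [hwy, ← hfx, hf x]
    rwa [hfix w hw hwx hwy]
  exact hmaps.image_subset.antisymm fun w hw => ⟨f w, hmaps hw, hf w⟩

namespace IsZColoop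

variable {g : ℕ} {S : Set (Fin g → ℤ)} {x y : Fin g → ℤ}

theorem exists_involution_swap (hx : IsZColoop S x) (hy : IsZColoop S y) (hxy : x ≠ y)
    (hxS : x ∈ S) (hyS : y ∈ S) :
    ∃ f : (Fin g → ℤ) →ₗ[ℤ] (Fin g → ℤ), Function.Involutive f ∧ f x = y ∧
      ∀ w ∈ S, w ≠ x → w ≠ y → f w = w := by
  obtain ⟨φ, hφx, hφ⟩ := hx.exists_dual
  obtain ⟨ψ, hψy, hψ⟩ := hy.exists_dual
  have hφy : φ y = 0 := hφ y hyS hxy.symm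
  have hψx : ψ x = 0 := hψ x hxS hxy
  exact ⟨coordSwap φ ψ x y, coordSwap_involutive hφx hφy hψx hψy,
    coordSwap_apply_left hφx hψx, fun w hw hwx hwy =>
      coordSwap_apply_of_eq_zero (hφ w hw hwx) (hψ w hw hwy)⟩

end IsZColoop

section RankOneForms

variable {g n : ℕ}

def rankOneForm (x : Fin g → ℤ) : Matrix (Fin g) (Fin g) ℝ :=
  vecMulVec (fun j => (x j : ℝ)) (fun j => (x j : ℝ))

theorem conjMap_rankOneForm (A : Matrix (Fin g) (Fin g) ℤ) (x : Fin g → ℤ) :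
    conjMap (A.map (Int.cast : ℤ → ℝ)) (rankOneForm x) = rankOneForm (A *ᵥ x) := by
  have hcast : A.map (Int.cast : ℤ → ℝ) *ᵥ (fun j => (x j : ℝ)) = fun j => ((A *ᵥ x) j : ℝ) :=
    funext fun i => (RingHom.map_mulVec (Int.castRingHom ℝ) A x i).symm
  simp only [conjMap, LinearMap.coe_mk, AddHom.coe_mk, rankOneForm, mul_vecMulVec,
    vecMulVec_mul, vecMul_transpose, hcast]

theorem rankOneForm_ne_of_dual (φ : (Fin g → ℤ) →ₗ[ℤ] ℤ) {x y : Fin g → ℤ} (hx : φ x = 1)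
    (hy : φ y = 0) : rankOneForm x ≠ rankOneForm y := by
  intro h
  have hsmul : ∀ k, x k • x = y k • y := fun k => funext fun j => by
    have hjk := congr_fun (congr_fun h j) k
    simp only [rankOneForm, vecMulVec_apply] at hjk
    simp only [Pi.smul_apply, smul_eq_mul, mul_comm (x k), mul_comm (y k)]
    exact_mod_cast hjk
  have hx0 : x = 0 := funext fun k => by
    have hk := congr_arg φ (hsmul k)
    rwa [map_smul, map_smul, hx, hy, smul_zero, smul_eq_mul, mul_one] at hk
  simp [hx0] at hx

theorem IsZColoop.rankOneForm_ne {S : Set (Fin g → ℤ)} {x y : Fin g → ℤ} (hx : IsZColoop S x)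
    (hyS : y ∈ S) (hyx : y ≠ x) : rankOneForm x ≠ rankOneForm y := by
  obtain ⟨φ, hφx, hφ⟩ := hx.exists_dual
  exact rankOneForm_ne_of_dual φ hφx (hφ y hyS hyx)

theorem coneOf_eq_span (v : Fin n → Fin g → ℤ) :
    coneOf v = Submodule.span ℝ≥0 (rankOneForm '' Set.range v) := by
  ext Q
  rw [← Set.range_comp, SetLike.mem_coe, Submodule.mem_span_range_iff_exists_fun]
  constructor
  · rintro ⟨lam, hlam, rfl⟩
    exact ⟨fun i => ⟨lam i, hlam i⟩, rfl⟩
  · rintro ⟨c, rfl⟩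
    exact ⟨fun i => c i, fun i => (c i).2, rfl⟩

theorem span_coneOf (v : Fin n → Fin g → ℤ) :
    Submodule.span ℝ (coneOf v) = Submodule.span ℝ (rankOneForm '' Set.range v) := by
  rw [coneOf_eq_span, Submodule.span_span_of_tower]

variable {A : Matrix (Fin g) (Fin g) ℤ} {v : Fin n → Fin g → ℤ}

theorem image_conjMap_rankOneForm (hA : (A *ᵥ ·) '' Set.range v = Set.range v) :
    conjMap (A.map (Int.cast : ℤ → ℝ)) '' (rankOneForm '' Set.range v) =
      rankOneForm '' Set.range v := by
  simp only [Set.image_image, conjMap_rankOneForm]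
  rw [← Set.image_image rankOneForm, hA]

theorem image_conjMap_coneOf (hA : (A *ᵥ ·) '' Set.range v = Set.range v) :
    conjMap (A.map (Int.cast : ℤ → ℝ)) '' coneOf v = coneOf v := by
  rw [coneOf_eq_span, ← LinearMap.coe_restrictScalars ℝ≥0, ← Submodule.map_coe,
    Submodule.map_span, LinearMap.coe_restrictScalars, image_conjMap_rankOneForm hA]

theorem conjMap_mem_span_coneOf (hA : (A *ᵥ ·) '' Set.range v = Set.range v) :
    ∀ X ∈ Submodule.span ℝ (coneOf v),
      conjMap (A.map (Int.cast : ℤ → ℝ)) X ∈ Submodule.span ℝ (coneOf v) := by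
  intro X hX
  rw [span_coneOf, ← image_conjMap_rankOneForm hA, Submodule.span_image]
  exact Submodule.mem_map_of_mem (span_coneOf v ▸ hX)

theorem det_restrict_conjMap_eq_neg_one
    (hW : ∀ X ∈ Submodule.span ℝ (coneOf v),
      conjMap (A.map (Int.cast : ℤ → ℝ)) X ∈ Submodule.span ℝ (coneOf v))
    {x y : Fin g → ℤ} (hx : x ∈ Set.range v) (hy : y ∈ Set.range v)
    (hxy : rankOneForm x ≠ rankOneForm y) (hAx : A *ᵥ x = y) (hAy : A *ᵥ y = x)
    (hfix : ∀ w ∈ Set.range v, w ≠ x → w ≠ y → A *ᵥ w = w) :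
    LinearMap.det ((conjMap (A.map (Int.cast : ℤ → ℝ))).restrict hW) = -1 := by
  set K := conjMap (A.map (Int.cast : ℤ → ℝ))
  set d := rankOneForm x - rankOneForm y
  have hmem : ∀ w ∈ Set.range v, rankOneForm w ∈ Submodule.span ℝ (coneOf v) := fun w hw => by
    rw [span_coneOf]
    exact Submodule.subset_span (Set.mem_image_of_mem _ hw)
  have hdV : d ∈ Submodule.span ℝ (coneOf v) := sub_mem (hmem x hx) (hmem y hy)
  have hKd : K d = -d := by simp [K, d, conjMap_rankOneForm, hAx, hAy]
  have hsub : Submodule.span ℝ (coneOf v) ≤ (ℝ ∙ d).comap (K - LinearMap.id) := by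
    rw [span_coneOf, Submodule.span_le]
    rintro _ ⟨w, hw, rfl⟩
    rw [SetLike.mem_coe, Submodule.mem_comap, LinearMap.sub_apply, LinearMap.id_apply,
      conjMap_rankOneForm, Submodule.mem_span_singleton]
    by_cases hwx : w = x
    · exact ⟨-1, by simp [d, hwx, hAx]⟩
    by_cases hwy : w = y
    · exact ⟨1, by simp [d, hwy, hAy]⟩
    exact ⟨0, by simp [hfix w hw hwx hwy]⟩
  refine LinearMap.det_eq_neg_one_of_sub_mem_span_singleton _ (d := ⟨d, hdV⟩)
    (by simpa [Subtype.ext_iff, d] using sub_ne_zero.mpr hxy) (Subtype.ext hKd) ?_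
  rintro ⟨X, hX⟩
  obtain ⟨a, ha⟩ := Submodule.mem_span_singleton.mp (hsub hX)
  exact Submodule.mem_span_singleton.mpr ⟨a, Subtype.ext ha⟩

end RankOneForms

/-- If `v₁ ≠ v₂` are two distinct `ℤ^g`-coloops of `S = {v₁, …, vₙ}`, then
the cone `σ = ℝ≥0⟨v₁v₁ᵀ, …, vₙvₙᵀ⟩` has an orientation-reversing automorphism induced by
an element of `GL_g(ℤ)`: some `A` with `det A = ±1` such that `X ↦ A X Aᵀ` maps `σ` onto
`σ` and restricts to the `ℝ`-span of `σ` with determinant `−1`. -/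
theorem two_coloops_orientation_reversing_automorphism
    {g n : ℕ} (v : Fin n → Fin g → ℤ) (i₁ i₂ : Fin n) (hne : v i₁ ≠ v i₂)
    (hc1 : IsZColoop (Set.range v) (v i₁)) (hc2 : IsZColoop (Set.range v) (v i₂)) :
    ∃ A : Matrix (Fin g) (Fin g) ℤ, IsUnit A.det ∧
      conjMap (A.map (Int.cast : ℤ → ℝ)) '' coneOf v = coneOf v ∧
      ∃ hW : ∀ X ∈ Submodule.span ℝ (coneOf v),
          conjMap (A.map (Int.cast : ℤ → ℝ)) X ∈ Submodule.span ℝ (coneOf v),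
        LinearMap.det ((conjMap (A.map (Int.cast : ℤ → ℝ))).restrict hW) = -1 := by
  obtain ⟨f, hf, hfx, hfix⟩ := hc1.exists_involution_swap hc2 hne ⟨i₁, rfl⟩ ⟨i₂, rfl⟩
  set A := LinearMap.toMatrix' f
  have hAf : ∀ w, A *ᵥ w = f w := LinearMap.toMatrix'_mulVec f
  have hA : (A *ᵥ ·) '' Set.range v = Set.range v := by
    simpa only [hAf] using
      hf.image_eq_self_of_swap (Set.mem_range_self i₁) (Set.mem_range_self i₂) hfx hfix
  have hAA : A * A = 1 := by
    rw [← LinearMap.toMatrix'_comp, show f ∘ₗ f = LinearMap.id from LinearMap.ext hf,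
      LinearMap.toMatrix'_id]
  refine ⟨A, isUnit_det_of_right_inverse hAA, image_conjMap_coneOf hA,
    conjMap_mem_span_coneOf hA, det_restrict_conjMap_eq_neg_one _ ⟨i₁, rfl⟩ ⟨i₂, rfl⟩
      (hc1.rankOneForm_ne ⟨i₂, rfl⟩ hne.symm) ?_ ?_ ?_⟩
  · rw [hAf, hfx]
  · rw [hAf, ← hfx, hf]
  · exact fun w hw hw₁ hw₂ => (hAf w).trans (hfix w hw hw₁ hw₂)
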